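/- Let M and X be metric spaces with M having at least 3 points, and let R and R' be correspondences between M and X with dis R < min{ s(M)/2, e(M)/2 } and dis R' < min{ s(M)/2, e(M)/2 }. Then R = R' (as subsets of M × X). -/

import Mathlib

/-!
Choose sections `f : M → X` of `R` and `g : X → M` of `R'`. Since `dis R, dis R' < s(M)/2`,
points of `X` closer than `s(M)/2` have the same partners in `M`, which makes `g ∘ f` a
bijection of `M`; its distortion is at most `dis R + dis R' < e(M)`, so `g ∘ f = id`.
Hence every `(m, x) ∈ R` satisfies `g x = g (f m) = m`, i.e. `(m, x) = (g x, x) ∈ R'`.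
-/

open scoped ENNReal

/-- A correspondence between `X` and `Y`: a relation such that both projections are
surjective on it. -/
def IsCorrespondence {X Y : Type*} (R : Set (X × Y)) : Prop :=
  (∀ x : X, ∃ y : Y, (x, y) ∈ R) ∧ ∀ y : Y, ∃ x : X, (x, y) ∈ R

/-- The distortion of a relation between two metric spaces, with values in `[0,∞]`. -/
noncomputable def relDis {X Y : Type*} [MetricSpace X] [MetricSpace Y]
    (σ : Set (X × Y)) : ℝ≥0∞ :=
  ⨆ (p ∈ σ) (q ∈ σ), ENNReal.ofReal |dist (Prod.fst p) (Prod.fst q) -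
    dist (Prod.snd p) (Prod.snd q)|

/-- `s(M)`: the infimum of distances between distinct points of `M`. -/
noncomputable def sSpec (M : Type*) [MetricSpace M] : ℝ≥0∞ :=
  ⨅ (x : M) (y : M) (_ : x ≠ y), edist x y

/-- The distortion of a self-map of a metric space, with values in `[0,∞]`. -/
noncomputable def mapDis {M : Type*} [MetricSpace M] (f : M → M) : ℝ≥0∞ :=
  ⨆ (x : M) (y : M), ENNReal.ofReal |dist x y - dist (f x) (f y)|

/-- `e(M)`: the infimum of distortions of non-identity bijections of `M`. -/
noncomputable def eSpec (M : Type*) [MetricSpace M] : ℝ≥0∞ :=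
  ⨅ (f : M ≃ M) (_ : f ≠ Equiv.refl M), mapDis (f : M → M)

/-- `t(M)`: the infimum of the triangle inequality defects over triples of pairwise
distinct points of `M`. -/
noncomputable def tSpec (M : Type*) [MetricSpace M] : ℝ≥0∞ :=
  ⨅ (x : M) (y : M) (z : M) (_ : x ≠ y) (_ : y ≠ z) (_ : x ≠ z),
    ENNReal.ofReal (dist x y + dist y z - dist x z)

theorem ENNReal.ofReal_le_ofReal_add_ofReal_abs_sub (a b : ℝ) :
    ENNReal.ofReal a ≤ ENNReal.ofReal b + ENNReal.ofReal |a - b| :=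
  calc ENNReal.ofReal a ≤ ENNReal.ofReal (b + |a - b|) :=
        ENNReal.ofReal_le_ofReal (by linarith [le_abs_self (a - b)])
    _ ≤ ENNReal.ofReal b + ENNReal.ofReal |a - b| := ENNReal.ofReal_add_le

section Distortion

variable {X Y : Type*} [MetricSpace X] [MetricSpace Y] {σ : Set (X × Y)} {p q : X × Y}

theorem ofReal_abs_dist_sub_dist_le_relDis (hp : p ∈ σ) (hq : q ∈ σ) :
    ENNReal.ofReal |dist p.1 q.1 - dist p.2 q.2| ≤ relDis σ :=
  le_iSup₂_of_le p hp (le_iSup₂_of_le q hq le_rfl)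

theorem edist_fst_le_edist_snd_add_relDis (hp : p ∈ σ) (hq : q ∈ σ) :
    edist p.1 q.1 ≤ edist p.2 q.2 + relDis σ := by
  rw [edist_dist, edist_dist]
  exact (ENNReal.ofReal_le_ofReal_add_ofReal_abs_sub _ _).trans
    (add_le_add le_rfl (ofReal_abs_dist_sub_dist_le_relDis hp hq))

theorem edist_snd_le_edist_fst_add_relDis (hp : p ∈ σ) (hq : q ∈ σ) :
    edist p.2 q.2 ≤ edist p.1 q.1 + relDis σ := by
  have h := ofReal_abs_dist_sub_dist_le_relDis hp hq
  rw [abs_sub_comm] at h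
  rw [edist_dist, edist_dist]
  exact (ENNReal.ofReal_le_ofReal_add_ofReal_abs_sub _ _).trans (add_le_add le_rfl h)

theorem edist_le_relDis_of_mem {x : X} {y y' : Y} (hy : (x, y) ∈ σ) (hy' : (x, y') ∈ σ) :
    edist y y' ≤ relDis σ := by
  simpa using edist_snd_le_edist_fst_add_relDis hy hy'

end Distortion

section Spectrum

variable {M X : Type*} [MetricSpace M] [MetricSpace X]

theorem sSpec_le_edist {x y : M} (h : x ≠ y) : sSpec M ≤ edist x y :=
  iInf_le_of_le x (iInf_le_of_le y (iInf_le _ h))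

theorem eSpec_le_mapDis {e : M ≃ M} (he : e ≠ Equiv.refl M) : eSpec M ≤ mapDis e :=
  iInf_le_of_le e (iInf_le _ he)

theorem eq_id_of_bijective_of_mapDis_lt_eSpec {φ : M → M} (hφ : φ.Bijective)
    (h : mapDis φ < eSpec M) : φ = id := by
  by_contra hne
  refine (eSpec_le_mapDis (e := Equiv.ofBijective φ hφ) ?_).not_gt h
  exact fun he => hne (congrArg DFunLike.coe he)

theorem eq_of_edist_snd_lt_sSpec_half {S : Set (M × X)} (hS : relDis S < sSpec M / 2)
    {a b : M} {x y : X} (ha : (a, x) ∈ S) (hb : (b, y) ∈ S) (hxy : edist x y < sSpec M / 2) :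
    a = b := by
  by_contra hne
  have hlt : edist x y + relDis S < sSpec M :=
    (ENNReal.add_lt_add hxy hS).trans_le (ENNReal.add_halves _).le
  exact ((sSpec_le_edist hne).trans (edist_fst_le_edist_snd_add_relDis ha hb)).not_gt hlt

theorem mapDis_comp_le_relDis_add_relDis {R R' : Set (M × X)} {f : M → X} {g : X → M}
    (hf : ∀ m, (m, f m) ∈ R) (hg : ∀ x, (g x, x) ∈ R') :
    mapDis (g ∘ f) ≤ relDis R + relDis R' := by
  refine iSup₂_le fun m m' => ?_
  have hR := ofReal_abs_dist_sub_dist_le_relDis (hf m) (hf m')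
  have hR' := ofReal_abs_dist_sub_dist_le_relDis (hg (f m)) (hg (f m'))
  rw [abs_sub_comm] at hR'
  calc ENNReal.ofReal |dist m m' - dist (g (f m)) (g (f m'))|
      ≤ ENNReal.ofReal (|dist m m' - dist (f m) (f m')| +
          |dist (f m) (f m') - dist (g (f m)) (g (f m'))|) :=
        ENNReal.ofReal_le_ofReal (abs_sub_le _ _ _)
    _ ≤ relDis R + relDis R' := ENNReal.ofReal_add_le.trans (add_le_add hR hR')

theorem bijective_comp_of_relDis_lt_sSpec_half {R R' : Set (M × X)}
    (hR : IsCorrespondence R) (hR' : IsCorrespondence R')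
    (hs : relDis R < sSpec M / 2) (hs' : relDis R' < sSpec M / 2)
    {f : M → X} {g : X → M} (hf : ∀ m, (m, f m) ∈ R) (hg : ∀ x, (g x, x) ∈ R') :
    (g ∘ f).Bijective := by
  constructor
  · intro m m' h
    have hclose : edist (f m) (f m') ≤ relDis R' := by
      simpa [show g (f m) = g (f m') from h] using
        edist_snd_le_edist_fst_add_relDis (hg (f m)) (hg (f m'))
    exact eq_of_edist_snd_lt_sSpec_half hs (hf m) (hf m') (hclose.trans_lt hs')
  · intro m'
    obtain ⟨x', hx'⟩ := hR'.1 m'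
    obtain ⟨m, hm⟩ := hR.2 x'
    exact ⟨m, eq_of_edist_snd_lt_sSpec_half hs' (hg (f m)) hx'
      ((edist_le_relDis_of_mem (hf m) hm).trans_lt hs)⟩

theorem subset_of_relDis_lt {R R' : Set (M × X)}
    (hR : IsCorrespondence R) (hR' : IsCorrespondence R')
    (hdis : relDis R < min (sSpec M / 2) (eSpec M / 2))
    (hdis' : relDis R' < min (sSpec M / 2) (eSpec M / 2)) :
    R ⊆ R' := by
  have hs := hdis.trans_le (min_le_left _ _)
  have hs' := hdis'.trans_le (min_le_left _ _)
  have he : relDis R + relDis R' < eSpec M :=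
    (ENNReal.add_lt_add (hdis.trans_le (min_le_right _ _))
      (hdis'.trans_le (min_le_right _ _))).trans_le (ENNReal.add_halves _).le
  choose f hf using hR.1
  choose g hg using hR'.2
  have hgf : g ∘ f = id := eq_id_of_bijective_of_mapDis_lt_eSpec
    (bijective_comp_of_relDis_lt_sSpec_half hR hR' hs hs' hf hg)
    ((mapDis_comp_le_relDis_add_relDis hf hg).trans_lt he)
  rintro ⟨m, x⟩ hmx
  have hgx : g x = m := by
    rw [eq_of_edist_snd_lt_sSpec_half hs' (hg x) (hg (f m))
      ((edist_le_relDis_of_mem hmx (hf m)).trans_lt hs)]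
    exact congrFun hgf m
  simpa [hgx] using hg x

end Spectrum

theorem correspondence_unique_general {M X : Type*} [MetricSpace M] [MetricSpace X]
    (R R' : Set (M × X)) (hR : IsCorrespondence R) (hR' : IsCorrespondence R')
    (hdis : relDis R < min (sSpec M / 2) (eSpec M / 2))
    (hdis' : relDis R' < min (sSpec M / 2) (eSpec M / 2)) :
    R = R' :=
  (subset_of_relDis_lt hR hR' hdis hdis').antisymm (subset_of_relDis_lt hR' hR hdis' hdis)

/-- If `M` has at least 3 points and `R`, `R'` are correspondences
between `M` and `X` with distortions `< min (s(M)/2) (e(M)/2)`, then `R = R'`. -/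
theorem correspondence_unique {M X : Type*} [MetricSpace M] [MetricSpace X]
    (h3 : 3 ≤ Cardinal.mk M)
    (R R' : Set (M × X)) (hR : IsCorrespondence R) (hR' : IsCorrespondence R')
    (hdis : relDis R < min (sSpec M / 2) (eSpec M / 2))
    (hdis' : relDis R' < min (sSpec M / 2) (eSpec M / 2)) :
    R = R' :=
  correspondence_unique_general R R' hR hR' hdis hdis'
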